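/- Fix n ≥ 2 and let G_n be the weighted graph with vertex set {a_1,…,a_n, b_1,…,b_n} and weights w(a_i,b_j) = 1 for all i ≠ j and weight 0 on all other unordered pairs. Then there exists a hierarchical clustering tree T' on G_n such that every hierarchical clustering tree T in which, for each i, the leaves a_i and b_i are the two children of a common internal node satisfies val(T) ≤ (2(n+1)/(3n))·val(T'). -/

import Mathlib

open Finset

/-- A hierarchical clustering tree: a rooted binary tree with leaves labelled by vertices. -/
inductive HC (V : Type*) where
  | leaf : V → HC V
  | node : HC V → HC V → HC V

namespace HC

variable {V : Type*}

/-- The list of leaf labels of a tree, left to right. -/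
def leafList : HC V → List V
  | .leaf v => [v]
  | .node l r => leafList l ++ leafList r

/-- The set of leaf labels of a tree. -/
def leaves [DecidableEq V] (t : HC V) : Finset V :=
  t.leafList.toFinset

/-- `t.cluster i j` is the leaf set of the subtree of `t` rooted at the least common
ancestor of the leaves `i` and `j` (i.e. `leaves(T[i ∨ j])`). -/
def cluster [DecidableEq V] : HC V → V → V → Finset V
  | .leaf v, _, _ => {v}
  | .node l r, i, j =>
    if i ∈ l.leaves ∧ j ∈ l.leaves then l.cluster i j
    else if i ∈ r.leaves ∧ j ∈ r.leaves then r.cluster i j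
    else (HC.node l r).leaves

/-- `t` is a hierarchical clustering tree on the whole vertex type `V`:
its leaves are in bijection with `V`. -/
def IsTreeOn [Fintype V] [DecidableEq V] (t : HC V) : Prop :=
  t.leafList.Nodup ∧ t.leaves = Finset.univ

/-- Sum of `f A B` over all internal nodes of the tree, where `A`, `B` are the
leaf sets of the two children of the internal node. -/
def internalSum [DecidableEq V] (f : Finset V → Finset V → ℝ) : HC V → ℝ
  | .leaf _ => 0
  | .node l r => f l.leaves r.leaves + internalSum f l + internalSum f r

/-- The list of all subtrees of a tree. -/
def subtreesList : HC V → List (HC V)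
  | .leaf v => [.leaf v]
  | .node l r => .node l r :: (subtreesList l ++ subtreesList r)

/-- Dasgupta's cost: sum over unordered pairs `{i,j}` of distinct vertices of
`w i j * |leaves(T[i ∨ j])|`. -/
noncomputable def cost [Fintype V] [DecidableEq V] (w : V → V → ℝ) (t : HC V) : ℝ :=
  (1 / 2) * ∑ p ∈ Finset.univ.offDiag, w p.1 p.2 * ((t.cluster p.1 p.2).card : ℝ)

/-- Moseley–Wang revenue: sum over unordered pairs `{i,j}` of distinct vertices of
`w i j * |nonleaves(T[i ∨ j])|`. -/
noncomputable def rev [Fintype V] [DecidableEq V] (w : V → V → ℝ) (t : HC V) : ℝ :=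
  (1 / 2) * ∑ p ∈ Finset.univ.offDiag,
    w p.1 p.2 * ((Finset.univ \ t.cluster p.1 p.2).card : ℝ)

/-- Cohen-Addad et al.'s value: the same formula as cost, used for dissimilarity weights. -/
noncomputable def val [Fintype V] [DecidableEq V] (w : V → V → ℝ) (t : HC V) : ℝ :=
  cost w t

end HC

/-- The total weight `W`: the sum of `w i j` over unordered pairs of distinct vertices. -/
noncomputable def totalWeight {V : Type*} [Fintype V] [DecidableEq V] (w : V → V → ℝ) : ℝ :=
  (1 / 2) * ∑ p ∈ Finset.univ.offDiag, w p.1 p.2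

/-- The merge cost of merging disjoint clusters `A` and `B`. -/
noncomputable def mergeCost {V : Type*} [Fintype V] [DecidableEq V] (w : V → V → ℝ) (A B : Finset V) : ℝ :=
  (B.card : ℝ) * ∑ a ∈ A, ∑ c ∈ Finset.univ \ (A ∪ B), w a c
    + (A.card : ℝ) * ∑ b ∈ B, ∑ c ∈ Finset.univ \ (A ∪ B), w b c

/-- The merge revenue of merging disjoint clusters `A` and `B`. -/
noncomputable def mergeRev {V : Type*} [Fintype V] (w : V → V → ℝ) (A B : Finset V) : ℝ :=
  ((Fintype.card V : ℝ) - (A.card : ℝ) - (B.card : ℝ)) * ∑ a ∈ A, ∑ b ∈ B, w a b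

/-- The average linkage between disjoint nonempty clusters `A` and `B`. -/
noncomputable def avgLinkage {V : Type*} (w : V → V → ℝ) (A B : Finset V) : ℝ :=
  (1 / ((A.card : ℝ) * (B.card : ℝ))) * ∑ a ∈ A, ∑ b ∈ B, w a b

/-- A matching encoded as an involution `f : V → V`: the matched pairs are the pairs
`{v, f v}` with `f v ≠ v`; its weight is the sum of weights of matched pairs. -/
noncomputable def matchingWeight {V : Type*} [Fintype V] [DecidableEq V] (w : V → V → ℝ) (f : V → V) : ℝ :=
  (1 / 2) * ∑ v ∈ Finset.univ.filter (fun v => f v ≠ v), w v (f v)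

/-- A perfect matching encoded as a fixed-point-free involution. -/
def IsPerfectMatching {V : Type*} (f : V → V) : Prop :=
  (∀ v, f (f v) = v) ∧ ∀ v, f v ≠ v


/-- The weighted graph `G_n`: vertices `a_1,...,a_n` (left) and `b_1,...,b_n` (right),
`w(a_i, b_j) = 1` for `i ≠ j`, and weight `0` on all other pairs. -/
noncomputable def wG (n : ℕ) : (Fin n ⊕ Fin n) → (Fin n ⊕ Fin n) → ℝ :=
  fun x y =>
    match x, y with
    | Sum.inl i, Sum.inr j => if i = j then 0 else 1
    | Sum.inr i, Sum.inl j => if i = j then 0 else 1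
    | _, _ => 0

/-- For each `i`, the leaves `a_i` and `b_i` are the two children of a common internal node
of `t` (in either order). -/
def pairCond (n : ℕ) (t : HC (Fin n ⊕ Fin n)) : Prop :=
  ∀ i : Fin n,
    HC.node (HC.leaf (Sum.inl i)) (HC.leaf (Sum.inr i)) ∈ t.subtreesList ∨
    HC.node (HC.leaf (Sum.inr i)) (HC.leaf (Sum.inl i)) ∈ t.subtreesList

/-!
Trees in which every pair `{a_i, b_i}` is a cherry are trees on the `n` pairs, and any two pairs
are joined by total weight `2`. As for Dasgupta's cost on a uniform clique, the value of such a
tree does not depend on its shape: it is `4(n³ - n)/3`. The tree whose root separates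
`{a_i}` from `{b_i}` cuts every edge at the root, so its value is `2n · n(n - 1)`. The ratio of
the two values is exactly `2(n + 1)/(3n)`.
-/

namespace HC

variable {V : Type*}

lemma exists_leafList_eq : ∀ l : List V, l ≠ [] → ∃ t : HC V, t.leafList = l
  | [], h => absurd rfl h
  | [v], _ => ⟨leaf v, rfl⟩
  | v :: w :: l, _ => by
    obtain ⟨t, ht⟩ := exists_leafList_eq (w :: l) (List.cons_ne_nil _ _)
    exact ⟨node (leaf v) t, by simp [leafList, ht]⟩

variable [DecidableEq V]

@[simp]
lemma leaves_leaf (v : V) : (leaf v).leaves = {v} := by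
  simp [leaves, leafList]

@[simp]
lemma leaves_node (l r : HC V) : (node l r).leaves = l.leaves ∪ r.leaves := by
  simp [leaves, leafList]

lemma leafList_nodup_node {l r : HC V} :
    (node l r).leafList.Nodup ↔
      l.leafList.Nodup ∧ r.leafList.Nodup ∧ Disjoint l.leaves r.leaves := by
  simp only [leafList, List.nodup_append, leaves, Finset.disjoint_left, List.mem_toFinset]
  grind

lemma leaves_subset_of_mem_subtreesList {s : HC V} :
    ∀ {t : HC V}, s ∈ t.subtreesList → s.leaves ⊆ t.leaves
  | leaf v, h => by simp_all [subtreesList]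
  | node l r, h => by
    simp only [subtreesList, List.mem_cons, List.mem_append] at h
    rcases h with rfl | h | h
    · rfl
    · exact (leaves_subset_of_mem_subtreesList h).trans (by simp)
    · exact (leaves_subset_of_mem_subtreesList h).trans (by simp)

lemma cluster_node_of_mem_left {l r : HC V} {i j : V} (hi : i ∈ l.leaves)
    (hj : j ∈ l.leaves) : (node l r).cluster i j = l.cluster i j := by
  simp [cluster, hi, hj]

lemma cluster_node_of_mem_right {l r : HC V} {i j : V} (hd : Disjoint l.leaves r.leaves)
    (hi : i ∈ r.leaves) (hj : j ∈ r.leaves) : (node l r).cluster i j = r.cluster i j := by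
  simp [cluster, hi, hj, disjoint_right.1 hd hi]

lemma cluster_node_of_not_mem {l r : HC V} {i j : V} (hl : ¬(i ∈ l.leaves ∧ j ∈ l.leaves))
    (hr : ¬(i ∈ r.leaves ∧ j ∈ r.leaves)) :
    (node l r).cluster i j = l.leaves ∪ r.leaves := by
  rw [cluster, if_neg hl, if_neg hr, leaves_node]

/-- Twice the cost of `t` restricted to the pairs of its own leaves. -/
noncomputable def clusterSum (w : V → V → ℝ) (t : HC V) : ℝ :=
  ∑ p ∈ t.leaves.offDiag, w p.1 p.2 * (t.cluster p.1 p.2).card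

lemma cost_eq_clusterSum_div_two [Fintype V] (w : V → V → ℝ) {t : HC V}
    (ht : t.leaves = univ) : t.cost w = clusterSum w t / 2 := by
  rw [cost, clusterSum, ht]
  ring

lemma clusterSum_eq_zero {w : V → V → ℝ} {t : HC V}
    (hw : ∀ x ∈ t.leaves, ∀ y ∈ t.leaves, w x y = 0) : clusterSum w t = 0 :=
  sum_eq_zero fun p hp => by
    rw [mem_offDiag] at hp
    rw [hw _ hp.1 _ hp.2.1, zero_mul]

lemma clusterSum_node (w : V → V → ℝ) {l r : HC V} (hd : Disjoint l.leaves r.leaves) :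
    clusterSum w (node l r) = clusterSum w l + clusterSum w r +
      #(l.leaves ∪ r.leaves) * (∑ x ∈ l.leaves, ∑ y ∈ r.leaves, w x y +
        ∑ x ∈ r.leaves, ∑ y ∈ l.leaves, w x y) := by
  have hlr : ∀ {x y}, x ∈ l.leaves → y ∈ r.leaves →
      (node l r).cluster x y = l.leaves ∪ r.leaves := fun hx hy =>
    cluster_node_of_not_mem (fun h => disjoint_left.1 hd h.2 hy)
      (fun h => disjoint_left.1 hd hx h.1)
  have hrl : ∀ {x y}, x ∈ r.leaves → y ∈ l.leaves →
      (node l r).cluster x y = l.leaves ∪ r.leaves := fun hx hy =>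
    cluster_node_of_not_mem (fun h => disjoint_left.1 hd h.1 hx)
      (fun h => disjoint_left.1 hd hy h.2)
  have h1 : Disjoint l.leaves.offDiag r.leaves.offDiag :=
    disjoint_left.2 fun p hl hr => disjoint_left.1 hd (mem_offDiag.1 hl).1 (mem_offDiag.1 hr).1
  have h2 : Disjoint (l.leaves.offDiag ∪ r.leaves.offDiag) (l.leaves ×ˢ r.leaves) := by
    simp only [disjoint_left, mem_union, mem_offDiag, mem_product]
    exact fun p hp hq => hp.elim (fun h => disjoint_left.1 hd h.2.1 hq.2)
      (fun h => disjoint_left.1 hd hq.1 h.1)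
  have h3 : Disjoint (l.leaves.offDiag ∪ r.leaves.offDiag ∪ l.leaves ×ˢ r.leaves)
      (r.leaves ×ˢ l.leaves) := by
    simp only [disjoint_left, mem_union, mem_offDiag, mem_product]
    exact fun p hp hq => hp.elim (fun h => h.elim (fun h => disjoint_left.1 hd h.1 hq.1)
      (fun h => disjoint_left.1 hd hq.2 h.2.1)) (fun h => disjoint_left.1 hd h.1 hq.1)
  rw [clusterSum, leaves_node, offDiag_union hd, sum_union h3, sum_union h2, sum_union h1,
    sum_product, sum_product, mul_add, ← add_assoc, mul_sum, mul_sum]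
  refine congr_arg₂ (· + ·) (congr_arg₂ (· + ·) (congr_arg₂ (· + ·) ?_ ?_) ?_) ?_
  · exact sum_congr rfl fun p hp => by
      rw [cluster_node_of_mem_left (mem_offDiag.1 hp).1 (mem_offDiag.1 hp).2.1]
  · exact sum_congr rfl fun p hp => by
      rw [cluster_node_of_mem_right hd (mem_offDiag.1 hp).1 (mem_offDiag.1 hp).2.1]
  · exact sum_congr rfl fun x hx => by
      rw [mul_sum]
      exact sum_congr rfl fun y hy => by rw [hlr hx hy, mul_comm]
  · exact sum_congr rfl fun x hx => by
      rw [mul_sum]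
      exact sum_congr rfl fun y hy => by rw [hrl hx hy, mul_comm]

end HC

lemma sum_sum_ite_eq_zero_one {α : Type*} [DecidableEq α] (I J : Finset α) :
    ∑ i ∈ I, ∑ j ∈ J, (if i = j then (0 : ℝ) else 1) = #I * #J - #(I ∩ J) := by
  have h : ∀ i j : α, (if i = j then (0 : ℝ) else 1) = 1 - if i = j then 1 else 0 := by
    intro i j
    split_ifs <;> ring
  simp_rw [h, sum_sub_distrib, sum_ite_eq, sum_boole, sum_const, filter_mem_eq_inter]
  simp

section PairTrees

open HC

variable {n : ℕ}

@[simp] lemma wG_inl_inl (i j : Fin n) : wG n (.inl i) (.inl j) = 0 := rfl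
@[simp] lemma wG_inr_inr (i j : Fin n) : wG n (.inr i) (.inr j) = 0 := rfl
@[simp] lemma wG_inl_inr (i j : Fin n) : wG n (.inl i) (.inr j) = if i = j then 0 else 1 := rfl
@[simp] lemma wG_inr_inl (i j : Fin n) : wG n (.inr i) (.inl j) = if i = j then 0 else 1 := rfl

lemma sum_sum_wG (I I' J J' : Finset (Fin n)) :
    ∑ x ∈ I.disjSum I', ∑ y ∈ J.disjSum J', wG n x y =
      (#I * #J' - #(I ∩ J')) + (#I' * #J - #(I' ∩ J)) := by
  simp [sum_disjSum, sum_sum_ite_eq_zero_one]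

def IsPairCherry (i : Fin n) (c : HC (Fin n ⊕ Fin n)) : Prop :=
  c = .node (.leaf (.inl i)) (.leaf (.inr i)) ∨ c = .node (.leaf (.inr i)) (.leaf (.inl i))

/-- `Sum.elim id id v` is the index `i` with `v ∈ {a_i, b_i}`. -/
def HasPairCherries (s : HC (Fin n ⊕ Fin n)) : Prop :=
  ∀ v ∈ s.leaves, ∃ c ∈ s.subtreesList, IsPairCherry (Sum.elim id id v) c

lemma IsPairCherry.leaves {i : Fin n} {c : HC (Fin n ⊕ Fin n)} (h : IsPairCherry i c) :
    c.leaves = ({i} : Finset (Fin n)).disjSum {i} := by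
  rcases h with rfl | rfl <;> ext (x | x) <;> simp [eq_comm]

lemma IsPairCherry.clusterSum_eq_zero {i : Fin n} {c : HC (Fin n ⊕ Fin n)}
    (h : IsPairCherry i c) : clusterSum (wG n) c = 0 :=
  HC.clusterSum_eq_zero <| by
    rw [h.leaves]
    rintro (x | x) hx (y | y) hy <;> simp_all

lemma IsPairCherry.mem_leaves {v : Fin n ⊕ Fin n} {c : HC (Fin n ⊕ Fin n)}
    (h : IsPairCherry (Sum.elim id id v) c) : v ∈ c.leaves := by
  rw [h.leaves]
  cases v <;> simp

lemma hasPairCherries_of_pairCond {t : HC (Fin n ⊕ Fin n)} (h : pairCond n t) :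
    HasPairCherries t := fun v _ =>
  (h (Sum.elim id id v)).elim (fun h => ⟨_, h, .inl rfl⟩) (fun h => ⟨_, h, .inr rfl⟩)

lemma not_hasPairCherries_leaf (v : Fin n ⊕ Fin n) : ¬HasPairCherries (leaf v) := by
  intro h
  obtain ⟨c, hc, hvc⟩ := h v (by simp)
  simp only [subtreesList, List.mem_singleton] at hc
  subst hc
  rcases hvc with h | h <;> cases h

lemma HasPairCherries.of_node {l r : HC (Fin n ⊕ Fin n)} (h : HasPairCherries (node l r))
    (hd : Disjoint l.leaves r.leaves) (hlr : ∀ i, ¬IsPairCherry i (node l r)) :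
    HasPairCherries l ∧ HasPairCherries r := by
  constructor
  · intro v hv
    obtain ⟨c, hc, hvc⟩ := h v (by simp [hv])
    simp only [subtreesList, List.mem_cons, List.mem_append] at hc
    rcases hc with rfl | hc | hc
    · exact absurd hvc (hlr _)
    · exact ⟨c, hc, hvc⟩
    · exact absurd (leaves_subset_of_mem_subtreesList hc hvc.mem_leaves) (disjoint_left.1 hd hv)
  · intro v hv
    obtain ⟨c, hc, hvc⟩ := h v (by simp [hv])
    simp only [subtreesList, List.mem_cons, List.mem_append] at hc
    rcases hc with rfl | hc | hc
    · exact absurd hvc (hlr _)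
    · exact absurd (leaves_subset_of_mem_subtreesList hc hvc.mem_leaves) (disjoint_right.1 hd hv)
    · exact ⟨c, hc, hvc⟩

/-- The cross term at a node joining `p` and `q` pairs is `8pq(p + q) = 8/3 ((p+q)³ - p³ - q³)`. -/
theorem HasPairCherries.clusterSum_wG : ∀ {s : HC (Fin n ⊕ Fin n)},
    s.leafList.Nodup → HasPairCherries s →
      ∃ I : Finset (Fin n), s.leaves = I.disjSum I ∧
        clusterSum (wG n) s = 8 * ((#I : ℝ) ^ 3 - #I) / 3
  | leaf v, _, h => absurd h (not_hasPairCherries_leaf v)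
  | node l r, hnd, h => by
    obtain ⟨hl, hr, hd⟩ := leafList_nodup_node.1 hnd
    by_cases hc : ∃ i, IsPairCherry i (node l r)
    · obtain ⟨i, hi⟩ := hc
      exact ⟨{i}, hi.leaves, by rw [hi.clusterSum_eq_zero]; simp⟩
    obtain ⟨hhl, hhr⟩ := h.of_node hd (not_exists.1 hc)
    obtain ⟨I, hI, hIs⟩ := clusterSum_wG hl hhl
    obtain ⟨J, hJ, hJs⟩ := clusterSum_wG hr hhr
    have hIJ : Disjoint I J := disjoint_left.2 fun i hiI hiJ =>
      disjoint_left.1 hd (hI ▸ inl_mem_disjSum.2 hiI) (hJ ▸ inl_mem_disjSum.2 hiJ)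
    have hleaves : (node l r).leaves = (I ∪ J).disjSum (I ∪ J) := by
      rw [leaves_node, hI, hJ]
      ext (x | x) <;> simp
    refine ⟨I ∪ J, hleaves, ?_⟩
    rw [clusterSum_node _ hd, ← leaves_node, hleaves, hIs, hJs, hI, hJ, sum_sum_wG, sum_sum_wG,
      card_disjSum, card_union_of_disjoint hIJ, disjoint_iff_inter_eq_empty.1 hIJ,
      disjoint_iff_inter_eq_empty.1 hIJ.symm, card_empty]
    push_cast
    ring

lemma val_wG_of_pairCond {t : HC (Fin n ⊕ Fin n)} (ht : t.IsTreeOn) (hp : pairCond n t) :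
    t.val (wG n) = 4 * ((n : ℝ) ^ 3 - n) / 3 := by
  obtain ⟨I, hI, hIs⟩ := (hasPairCherries_of_pairCond hp).clusterSum_wG ht.1
  have hIuniv : I = univ := by
    rw [ht.2, ← univ_disjSum_univ] at hI
    exact (disjSum_inj.1 hI).1.symm
  rw [HC.val, cost_eq_clusterSum_div_two _ ht.2, hIs, hIuniv, card_univ, Fintype.card_fin]
  ring

lemma exists_isTreeOn_val_wG (hn : n ≠ 0) :
    ∃ t : HC (Fin n ⊕ Fin n), t.IsTreeOn ∧ t.val (wG n) = 2 * (n : ℝ) ^ 2 * (n - 1) := by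
  obtain ⟨tL, hL⟩ : ∃ t : HC (Fin n ⊕ Fin n), t.leafList = (List.finRange n).map Sum.inl :=
    exists_leafList_eq _ (by simpa using hn)
  obtain ⟨tR, hR⟩ : ∃ t : HC (Fin n ⊕ Fin n), t.leafList = (List.finRange n).map Sum.inr :=
    exists_leafList_eq _ (by simpa using hn)
  have hLl : tL.leaves = (univ : Finset (Fin n)).disjSum ∅ := by
    ext (x | x) <;> simp [leaves, hL]
  have hRl : tR.leaves = (∅ : Finset (Fin n)).disjSum univ := by
    ext (x | x) <;> simp [leaves, hR]
  have hd : Disjoint tL.leaves tR.leaves := by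
    rw [hLl, hRl, disjoint_left]
    rintro (x | x) <;> simp
  have huniv : (node tL tR).leaves = univ := by
    rw [leaves_node, hLl, hRl]
    ext (x | x) <;> simp
  have hnodup : (node tL tR).leafList.Nodup := leafList_nodup_node.2
    ⟨hL ▸ (List.nodup_finRange n).map Sum.inl_injective,
      hR ▸ (List.nodup_finRange n).map Sum.inr_injective, hd⟩
  refine ⟨node tL tR, ⟨hnodup, huniv⟩, ?_⟩
  have hzeroL : clusterSum (wG n) tL = 0 := HC.clusterSum_eq_zero <| by
    rw [hLl]
    rintro (x | x) hx (y | y) hy <;> simp_all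
  have hzeroR : clusterSum (wG n) tR = 0 := HC.clusterSum_eq_zero <| by
    rw [hRl]
    rintro (x | x) hx (y | y) hy <;> simp_all
  rw [HC.val, cost_eq_clusterSum_div_two _ huniv, clusterSum_node _ hd, hzeroL, hzeroR,
    ← leaves_node, huniv, hLl, hRl, sum_sum_wG, sum_sum_wG]
  simp only [card_univ, card_empty, Fintype.card_sum, Fintype.card_fin, inter_self]
  push_cast
  ring

end PairTrees

/-- On the graph `G_n` (`n ≥ 2`) there exists a hierarchical clustering tree `T'` such that
every hierarchical clustering tree `T` in which, for each `i`, the leaves `a_i` and `b_i`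
are the two children of a common internal node satisfies
`val(T) ≤ (2(n+1)/(3n))·val(T')`. -/
theorem stmt14 (n : ℕ) (hn : 2 ≤ n) :
    ∃ t' : HC (Fin n ⊕ Fin n), t'.IsTreeOn ∧
      ∀ t : HC (Fin n ⊕ Fin n), t.IsTreeOn → pairCond n t →
        HC.val (wG n) t ≤ (2 * ((n : ℝ) + 1) / (3 * (n : ℝ))) * HC.val (wG n) t' := by
  have hn0 : n ≠ 0 := by omega
  obtain ⟨t', ht', hval'⟩ := exists_isTreeOn_val_wG hn0
  refine ⟨t', ht', fun t ht hp => le_of_eq ?_⟩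
  rw [val_wG_of_pairCond ht hp, hval']
  field_simp [hn0]
  ring
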